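/- Let 𝒟 be a qualification domain existentially expressible in a constraint domain 𝒞 via ι, qVal and qBound, and let E_𝒟 be the associated two-clause CLP(𝒞)-program. Then for any satisfiable finite set Π of 𝒞-constraints: (1) for any ground term t: t ∈ ran(ι) ⟺ qVal(t) is true in 𝒞 ⟺ E_𝒟 ⊢_CHL (qVal(t) ⇐ Π); (2) for any ground terms r = ι(x), s = ι(y), t = ι(z) with x, y, z ∈ D∖{⊥}: x ⊑ y ∘ z ⟺ qBound(r,s,t) is true in 𝒞 ⟺ E_𝒟 ⊢_CHL (qBound(r,s,t) ⇐ Π). Both items remain valid if E_𝒟 is replaced by any CLP(𝒞)-program that includes the two clauses of E_𝒟 and has no additional occurrences of qVal and qBound at the head of clauses. -/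

import Mathlib

open Classical

namespace SQCLP

/-- A term signature: variables, basic values and ranked data constructors. -/
structure TSig where
  Var : Type
  BV : Type
  DC : Type
  dcArity : DC → ℕ

/-- Terms over a term signature. -/
inductive Term (S : TSig) : Type
  | var : S.Var → Term S
  | bv : S.BV → Term S
  | app : S.DC → List (Term S) → Term S

/-- Substitutions map variables to terms. -/
abbrev Subst (S : TSig) := S.Var → Term S

variable {S : TSig}

mutual
  /-- Application of a substitution to a term. -/
  def Term.subst (θ : Subst S) : Term S → Term S
    | .var x => θ x
    | .bv u => .bv u
    | .app c ts => .app c (Term.substList θ ts)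
  /-- Application of a substitution to a list of terms. -/
  def Term.substList (θ : Subst S) : List (Term S) → List (Term S)
    | [] => []
    | t :: ts => Term.subst θ t :: Term.substList θ ts
end

/-- Composition of substitutions: `(σ.comp ν) x = (σ x) ν`. -/
def Subst.comp (σ ν : Subst S) : Subst S := fun x => (σ x).subst ν

/-- A term is ground if it contains no variables. -/
inductive Term.IsGround : Term S → Prop
  | bv (u : S.BV) : IsGround (.bv u)
  | app (c : S.DC) (ts : List (Term S)) : (∀ t ∈ ts, IsGround t) → IsGround (.app c ts)

/-- The variable `x` occurs in the given term. -/
inductive Term.HasVar (x : S.Var) : Term S → Prop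
  | var : HasVar x (.var x)
  | app (c : S.DC) (ts : List (Term S)) (t : Term S) :
      t ∈ ts → HasVar x t → HasVar x (.app c ts)

/-- A valuation is a substitution all whose values are ground terms. -/
def IsValuation (η : Subst S) : Prop := ∀ x, (η x).IsGround

/-- A constraint domain over a term signature: ranked primitive predicate
symbols together with their interpretation on (ground) argument tuples. -/
structure ConstraintDomain (S : TSig) where
  PP : Type
  ppArity : PP → ℕ
  primTrue : PP → List (Term S) → Prop

variable {Cd : ConstraintDomain S}

/-- Atomic constraints: primitive atoms and equations. -/
inductive ACon (Cd : ConstraintDomain S) : Type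
  | prim : Cd.PP → List (Term S) → ACon Cd
  | eq : Term S → Term S → ACon Cd

/-- Application of a substitution to an atomic constraint. -/
def ACon.subst (θ : Subst S) : ACon Cd → ACon Cd
  | .prim r ts => .prim r (ts.map (Term.subst θ))
  | .eq t s => .eq (t.subst θ) (s.subst θ)

/-- Truth of a (ground) atomic constraint: primitive atoms via the
interpretation of the constraint domain; a ground equation is true iff its two
sides are syntactically identical. -/
def ACon.holds : ACon Cd → Prop
  | .prim r ts => Cd.primTrue r ts
  | .eq t s => t = s

/-- A valuation `η` solves an atomic constraint `c` iff `c η` is true. -/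
def solves (η : Subst S) (c : ACon Cd) : Prop := (c.subst η).holds

/-- The variable `x` occurs in the atomic constraint. -/
inductive ACon.HasVar (x : S.Var) : ACon Cd → Prop
  | prim (r : Cd.PP) (ts : List (Term S)) (t : Term S) :
      t ∈ ts → Term.HasVar x t → HasVar x (.prim r ts)
  | eqL (t s : Term S) : Term.HasVar x t → HasVar x (.eq t s)
  | eqR (t s : Term S) : Term.HasVar x s → HasVar x (.eq t s)

/-- The set of solutions (valuations) of a set of atomic constraints. -/
def SolC (Pi : Set (ACon Cd)) : Set (Subst S) :=
  {η | IsValuation η ∧ ∀ c ∈ Pi, solves η c}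

/-- A set of constraints is satisfiable iff it has some solution. -/
def Satisfiable (Pi : Set (ACon Cd)) : Prop := (SolC Pi).Nonempty

/-- Constraint entailment `Pi ⊨ c`. -/
def entails (Pi : Set (ACon Cd)) (c : ACon Cd) : Prop := ∀ η ∈ SolC Pi, solves η c

/-- An existential constraint `∃ Y₁ … Y_k (B₁ ∧ … ∧ B_m)`. -/
structure ExCon (Cd : ConstraintDomain S) where
  evars : List S.Var
  body : List (ACon Cd)

/-- A valuation `η` solves an existential constraint iff some valuation
agreeing with `η` except possibly on the existential variables makes every
atomic constraint of the body true. -/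
def ExCon.SolvedBy (e : ExCon Cd) (η : Subst S) : Prop :=
  ∃ η' : Subst S, IsValuation η' ∧ (∀ x, x ∉ e.evars → η' x = η x) ∧
    ∀ c ∈ e.body, solves η' c

/-- Entailment of an existential constraint. -/
def entailsEx (Pi : Set (ACon Cd)) (e : ExCon Cd) : Prop := ∀ η ∈ SolC Pi, e.SolvedBy η

/-- A free variable of an existential constraint. -/
def ExCon.FVar (e : ExCon Cd) (x : S.Var) : Prop :=
  x ∉ e.evars ∧ ∃ c ∈ e.body, ACon.HasVar x c

/-- Atoms over a constraint domain and an alphabet `DP` of defined predicate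
symbols: defined atoms, primitive atoms and equations. -/
inductive Atom (Cd : ConstraintDomain S) (DP : Type) : Type
  | defined : DP → List (Term S) → Atom Cd DP
  | prim : Cd.PP → List (Term S) → Atom Cd DP
  | eq : Term S → Term S → Atom Cd DP

variable {DP : Type}

/-- Application of a substitution to an atom. -/
def Atom.subst (θ : Subst S) : Atom Cd DP → Atom Cd DP
  | .defined p ts => .defined p (ts.map (Term.subst θ))
  | .prim r ts => .prim r (ts.map (Term.subst θ))
  | .eq t s => .eq (t.subst θ) (s.subst θ)

/-- Atomic constraints regarded as atoms. -/
def ACon.toAtom : ACon Cd → Atom Cd DP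
  | .prim r ts => .prim r ts
  | .eq t s => .eq t s

/-- The variable `x` occurs in the atom. -/
inductive Atom.HasVar (x : S.Var) : Atom Cd DP → Prop
  | defined (p : DP) (ts : List (Term S)) (t : Term S) :
      t ∈ ts → Term.HasVar x t → HasVar x (.defined p ts)
  | prim (r : Cd.PP) (ts : List (Term S)) (t : Term S) :
      t ∈ ts → Term.HasVar x t → HasVar x (.prim r ts)
  | eqL (t s : Term S) : Term.HasVar x t → HasVar x (.eq t s)
  | eqR (t s : Term S) : Term.HasVar x s → HasVar x (.eq t s)

/-- A clause `p(t₁,…,tₙ) ← B₁,…,Bₘ` of a CLP(𝒞)-program. -/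
structure Clause (Cd : ConstraintDomain S) (DP : Type) where
  head : DP
  args : List (Term S)
  body : List (Atom Cd DP)

/-- Constrained Horn Logic derivability `𝒫 ⊢_CHL (A ⇐ Pi)`, with the inference
rules (DA), (EA) and (PA). -/
inductive CHL (P : Set (Clause Cd DP)) (Pi : Set (ACon Cd)) : Atom Cd DP → Prop
  | DA (cl : Clause Cd DP) (θ : Subst S) (args' : List (Term S))
      (hmem : cl ∈ P) (hlen : args'.length = cl.args.length)
      (hargs : ∀ (i : ℕ) (h1 : i < args'.length) (h2 : i < cl.args.length),
        CHL P Pi (.eq (args'.get ⟨i, h1⟩) ((cl.args.get ⟨i, h2⟩).subst θ)))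
      (hbody : ∀ B ∈ cl.body, CHL P Pi (B.subst θ)) :
      CHL P Pi (.defined cl.head args')
  | EA (t s : Term S) (h : entails Pi (.eq t s)) : CHL P Pi (.eq t s)
  | PA (r : Cd.PP) (ts : List (Term S)) (h : entails Pi (.prim r ts)) :
      CHL P Pi (.prim r ts)

end SQCLP

/-- A qualification domain: a bounded lattice `D` together with an attenuation
operation `att` that is associative, commutative, monotone, has `⊤` as neutral
element, `⊥` as absorbing element, satisfies `att d e ≤ e` (strictly above `⊥`
whenever both arguments are), and distributes over binary infima. -/
structure QualDomain (D : Type) [Lattice D] [BoundedOrder D] where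
  att : D → D → D
  att_assoc : ∀ a b c : D, att (att a b) c = att a (att b c)
  att_comm : ∀ a b : D, att a b = att b a
  att_mono : ∀ a b c d : D, a ≤ b → c ≤ d → att a c ≤ att b d
  att_top : ∀ d : D, att d ⊤ = d
  att_bot : ∀ d : D, att d ⊥ = ⊥
  att_le : ∀ d e : D, att d e ≤ e
  att_ne_bot : ∀ d e : D, d ≠ ⊥ → e ≠ ⊥ → att d e ≠ ⊥
  att_inf : ∀ d e₁ e₂ : D, att d (e₁ ⊓ e₂) = att d e₁ ⊓ att d e₂

namespace SQCLP

variable {S : TSig} {Cd : ConstraintDomain S} {DP : Type}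
variable {D : Type} [Lattice D] [BoundedOrder D]

/-- An admissible proximity relation over the symbols of a constraint domain,
with values in a qualification domain `D`: reflexive and symmetric on basic
values, data constructors, defined predicate symbols (whose arity function is
`dpArity`) and primitive predicate symbols, taking the value `⊥` on symbols of
different arities.  (On variables it is fixed: `⊤` on equal variables and `⊥`
otherwise; pairs of symbols of different syntactic kinds are not comparable.) -/
structure Proximity (Cd : ConstraintDomain S) (DP : Type) (dpArity : DP → ℕ)
    (D : Type) [Lattice D] [BoundedOrder D] where
  onBV : S.BV → S.BV → D
  onDC : S.DC → S.DC → D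
  onDP : DP → DP → D
  onPP : Cd.PP → Cd.PP → D
  bv_refl : ∀ u, onBV u u = ⊤
  bv_symm : ∀ u v, onBV u v = onBV v u
  dc_refl : ∀ c, onDC c c = ⊤
  dc_symm : ∀ c c', onDC c c' = onDC c' c
  dc_arity : ∀ c c', onDC c c' ≠ ⊥ → S.dcArity c = S.dcArity c'
  dp_refl : ∀ p, onDP p p = ⊤
  dp_symm : ∀ p p', onDP p p' = onDP p' p
  dp_arity : ∀ p p', onDP p p' ≠ ⊥ → dpArity p = dpArity p'
  pp_refl : ∀ r, onPP r r = ⊤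
  pp_symm : ∀ r r', onPP r r' = onPP r' r
  pp_arity : ∀ r r', onPP r r' ≠ ⊥ → Cd.ppArity r = Cd.ppArity r'

variable {dpA : DP → ℕ}

/-- `ProxLe R d t s` holds iff `d ⊑ ℛ(t,s)`, where `ℛ` is extended structurally
from symbols to terms (for `d ≠ ⊥`; proximity of structurally incompatible
terms is `⊥`). -/
inductive ProxLe (R : Proximity Cd DP dpA D) : D → Term S → Term S → Prop
  | var (d : D) (x : S.Var) : ProxLe R d (.var x) (.var x)
  | bv (d : D) (u v : S.BV) : d ≤ R.onBV u v → ProxLe R d (.bv u) (.bv v)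
  | app (d : D) (c c' : S.DC) (ts ss : List (Term S)) :
      d ≤ R.onDC c c' → ts.length = ss.length →
      (∀ (i : ℕ) (h1 : i < ts.length) (h2 : i < ss.length),
        ProxLe R d (ts.get ⟨i, h1⟩) (ss.get ⟨i, h2⟩)) →
      ProxLe R d (.app c ts) (.app c' ss)

/-- The relation `t ≈_{d,Π} s`: there are terms `t̂`, `ŝ` with `Π ⊨ t == t̂`,
`Π ⊨ s == ŝ` and `⊥ ≠ d ⊑ ℛ(t̂, ŝ)`. -/
def approxRel (R : Proximity Cd DP dpA D) (Pi : Set (ACon Cd)) (d : D)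
    (t s : Term S) : Prop :=
  d ≠ ⊥ ∧ ∃ th sh : Term S,
    entails Pi (.eq t th) ∧ entails Pi (.eq s sh) ∧ ProxLe R d th sh

/-- A qualified program clause `p(t₁,…,tₙ) ←α B₁#w₁, …, Bₘ#wₘ`; the threshold
value `none` represents `?`. -/
structure QClause (Cd : ConstraintDomain S) (DP : Type)
    (D : Type) [Lattice D] [BoundedOrder D] where
  head : DP
  args : List (Term S)
  att : D
  body : List (Atom Cd DP × Option D)

/-- Well-formedness of a qualified clause: the attenuation value and all
threshold values belong to `D∖{⊥}`. -/
def QClause.WF (cl : QClause Cd DP D) : Prop :=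
  cl.att ≠ ⊥ ∧ ∀ b ∈ cl.body, ∀ w, b.2 = some w → w ≠ ⊥

/-- An SQCLP (or QCLP) program is a set of qualified clauses; it is
well-formed if all of its clauses are. -/
def WFProgram (P : Set (QClause Cd DP D)) : Prop := ∀ cl ∈ P, cl.WF

/-- `geqQ e w` is the relation `e ⊒? w`: identically true if `w = ?`. -/
def geqQ (e : D) : Option D → Prop
  | none => True
  | some w => w ≤ e

/-- The variable `x` occurs in the clause `cl`. -/
def QClause.occursVar (cl : QClause Cd DP D) (x : S.Var) : Prop :=
  (∃ t ∈ cl.args, Term.HasVar x t) ∨ (∃ b ∈ cl.body, Atom.HasVar x b.1)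

/-- Proximity-based Qualified Constrained Horn Logic derivability
`𝒫 ⊢_SQCHL (A#d ⇐ Π)`, with the inference rules (SQDA), (SQEA), (SQPA).
In rule (SQDA), the side condition `d ⊑ ⊓ᵢ₌₀ⁿ dᵢ ⊓ α ∘ ⊓ⱼ₌₁ᵐ eⱼ` is expressed
with iterated binary infima (empty infima being `⊤`). -/
inductive SQCHL (Q : QualDomain D) (R : Proximity Cd DP dpA D)
    (P : Set (QClause Cd DP D)) (Pi : Set (ACon Cd)) : Atom Cd DP → D → Prop
  | SQDA (p' : DP) (args' : List (Term S)) (cl : QClause Cd DP D) (θ : Subst S)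
      (d : D) (ds es : List D)
      (hmem : cl ∈ P)
      (hprox : R.onDP p' cl.head ≠ ⊥)
      (hlen : args'.length = cl.args.length)
      (hds : ds.length = args'.length)
      (hes : es.length = cl.body.length)
      (hargs : ∀ (i : ℕ) (h1 : i < args'.length) (h2 : i < cl.args.length)
          (h3 : i < ds.length),
        SQCHL Q R P Pi (.eq (args'.get ⟨i, h1⟩) ((cl.args.get ⟨i, h2⟩).subst θ))
          (ds.get ⟨i, h3⟩))
      (hbody : ∀ (j : ℕ) (h1 : j < cl.body.length) (h2 : j < es.length),
        SQCHL Q R P Pi ((cl.body.get ⟨j, h1⟩).1.subst θ) (es.get ⟨j, h2⟩))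
      (hth : ∀ (j : ℕ) (h1 : j < cl.body.length) (h2 : j < es.length),
        geqQ (es.get ⟨j, h2⟩) (cl.body.get ⟨j, h1⟩).2)
      (hd : d ≤ (R.onDP p' cl.head ⊓ ds.foldr (· ⊓ ·) ⊤) ⊓
        Q.att cl.att (es.foldr (· ⊓ ·) ⊤)) :
      SQCHL Q R P Pi (.defined p' args') d
  | SQEA (t s : Term S) (d : D) (h : approxRel R Pi d t s) :
      SQCHL Q R P Pi (.eq t s) d
  | SQPA (r : Cd.PP) (ts : List (Term S)) (d : D)
      (h : entails Pi (.prim r ts)) : SQCHL Q R P Pi (.prim r ts) d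

/-- Qualified Constrained Horn Logic derivability `𝒫 ⊢_QCHL (A#d ⇐ Π)` (the
specialization of SQCHL to the identity proximity relation), with the
inference rules (QDA), (QEA), (QPA). -/
inductive QCHL (Q : QualDomain D)
    (P : Set (QClause Cd DP D)) (Pi : Set (ACon Cd)) : Atom Cd DP → D → Prop
  | QDA (args' : List (Term S)) (cl : QClause Cd DP D) (θ : Subst S)
      (d : D) (ds es : List D)
      (hmem : cl ∈ P)
      (hlen : args'.length = cl.args.length)
      (hds : ds.length = args'.length)
      (hes : es.length = cl.body.length)
      (hargs : ∀ (i : ℕ) (h1 : i < args'.length) (h2 : i < cl.args.length)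
          (h3 : i < ds.length),
        QCHL Q P Pi (.eq (args'.get ⟨i, h1⟩) ((cl.args.get ⟨i, h2⟩).subst θ))
          (ds.get ⟨i, h3⟩))
      (hbody : ∀ (j : ℕ) (h1 : j < cl.body.length) (h2 : j < es.length),
        QCHL Q P Pi ((cl.body.get ⟨j, h1⟩).1.subst θ) (es.get ⟨j, h2⟩))
      (hth : ∀ (j : ℕ) (h1 : j < cl.body.length) (h2 : j < es.length),
        geqQ (es.get ⟨j, h2⟩) (cl.body.get ⟨j, h1⟩).2)
      (hd : d ≤ ds.foldr (· ⊓ ·) ⊤ ⊓ Q.att cl.att (es.foldr (· ⊓ ·) ⊤)) :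
      QCHL Q P Pi (.defined cl.head args') d
  | QEA (t s : Term S) (d : D) (h : entails Pi (.eq t s)) :
      QCHL Q P Pi (.eq t s) d
  | QPA (r : Cd.PP) (ts : List (Term S)) (d : D)
      (h : entails Pi (.prim r ts)) : QCHL Q P Pi (.prim r ts) d

/-- The defined-predicate alphabet of the program `elim_ℛ(𝒫)`: the original
defined predicate symbols, the fresh binary predicate `∼`, the fresh nullary
predicates `pay_λ` (`λ ∈ D`), and a fresh predicate `p̂_C` for each clause. -/
inductive EDP (Cd : ConstraintDomain S) (DP : Type)
    (D : Type) [Lattice D] [BoundedOrder D] : Type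
  | old : DP → EDP Cd DP D
  | sim : EDP Cd DP D
  | pay : D → EDP Cd DP D
  | hat : QClause Cd DP D → EDP Cd DP D

/-- The atom `pay_λ`. -/
def payAtom (lam : D) : Atom Cd (EDP Cd DP D) := .defined (.pay lam) []

/-- The atom `t ∼ s`. -/
def simAtom (t s : Term S) : Atom Cd (EDP Cd DP D) := .defined .sim [t, s]

/-- The QCLP(𝒟,𝒞)-program `EQ_ℛ` emulating proximity-based equality: the
clause `X ∼ Y ←⊤ (X==Y)#?`; clauses `u ∼ u' ←⊤ pay_λ#?` for basic values with
`ℛ(u,u') = λ ≠ ⊥`; clauses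
`c(X₁,…,Xₙ) ∼ c'(Y₁,…,Yₙ) ←⊤ pay_λ#?, ((Xᵢ ∼ Yᵢ)#?)ᵢ` for data constructors
with `ℛ(c,c') = λ ≠ ⊥`; and clauses `pay_λ ←λ` for each `λ ∈ D∖{⊥}`
(each clause for an arbitrary choice of pairwise distinct variables). -/
def EQR (R : Proximity Cd DP dpA D) : Set (QClause Cd (EDP Cd DP D) D) :=
  {cl | ∃ X Y : S.Var, X ≠ Y ∧
      cl = ⟨.sim, [.var X, .var Y], ⊤, [(.eq (.var X) (.var Y), none)]⟩} ∪
  {cl | ∃ u u' : S.BV, R.onBV u u' ≠ ⊥ ∧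
      cl = ⟨.sim, [.bv u, .bv u'], ⊤, [(payAtom (R.onBV u u'), none)]⟩} ∪
  {cl | ∃ (c c' : S.DC) (Xs Ys : List S.Var), R.onDC c c' ≠ ⊥ ∧
      Xs.length = S.dcArity c ∧ Ys.length = S.dcArity c' ∧ (Xs ++ Ys).Nodup ∧
      cl = ⟨.sim, [.app c (Xs.map .var), .app c' (Ys.map .var)], ⊤,
        (payAtom (R.onDC c c'), none) ::
          (List.zip Xs Ys).map (fun q => (simAtom (.var q.1) (.var q.2), none))⟩} ∪
  {cl | ∃ lam : D, lam ≠ ⊥ ∧ cl = ⟨.pay lam, [], lam, []⟩}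

/-- `A∼`: the translation of atoms used by `elim_ℛ`, replacing each equation
`t == s` by `t ∼ s` (and renaming each defined predicate `p` to its copy). -/
def Atom.toSim (D : Type) [Lattice D] [BoundedOrder D] :
    Atom Cd DP → Atom Cd (EDP Cd DP D)
  | .defined p ts => .defined (.old p) ts
  | .prim r ts => .prim r ts
  | .eq t s => simAtom t s

/-- The clause `Ĉ : p̂_C(t₁,…,tₙ) ←α B̄∼`. -/
def hatClause (cl : QClause Cd DP D) : QClause Cd (EDP Cd DP D) D :=
  ⟨.hat cl, cl.args, cl.att, cl.body.map (fun b => (b.1.toSim D, b.2))⟩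

/-- The transformed program `elim_ℛ(𝒫) = EQ_ℛ ∪ ⋃_{C ∈ 𝒫} Ĉ_ℛ`, where `Ĉ_ℛ`
consists of the clause `Ĉ` and, for each `p'` with `ℛ(p,p') = λ ≠ ⊥`, a clause
`p'(X₁,…,Xₙ) ←⊤ pay_λ#?, ((Xᵢ ∼ tᵢ)#?)ᵢ, p̂_C(t₁,…,tₙ)#?` with `X₁,…,Xₙ`
pairwise distinct variables not occurring in `C`. -/
def elimR (R : Proximity Cd DP dpA D) (P : Set (QClause Cd DP D)) :
    Set (QClause Cd (EDP Cd DP D) D) :=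
  EQR R ∪ {c' | ∃ cl ∈ P, c' = hatClause cl} ∪
  {c' | ∃ cl ∈ P, ∃ p' : DP, R.onDP cl.head p' ≠ ⊥ ∧ ∃ Xs : List S.Var,
    Xs.length = cl.args.length ∧ Xs.Nodup ∧ (∀ x ∈ Xs, ¬ cl.occursVar x) ∧
    c' = ⟨.old p', Xs.map .var, ⊤,
      (payAtom (R.onDP cl.head p'), none) ::
        (List.zip Xs cl.args).map (fun q => (simAtom (.var q.1) q.2, none)) ++
        [(.defined (.hat cl) cl.args, none)]⟩}

/-- The atom `A` mentions the defined predicate symbol `p`. -/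
def Atom.mentionsDP (p : DP) : Atom Cd DP → Prop
  | .defined q _ => q = p
  | _ => False

/-- The defined predicate symbol `p` occurs in the program `𝒫`. -/
def occursInProgram (P : Set (QClause Cd DP D)) (p : DP) : Prop :=
  ∃ cl ∈ P, cl.head = p ∨ ∃ b ∈ cl.body, b.1.mentionsDP p

/-- The defined predicate symbol `p` is affected by `𝒫` (w.r.t. `ℛ`). -/
def affected (R : Proximity Cd DP dpA D) (P : Set (QClause Cd DP D))
    (p : DP) : Prop :=
  ∃ p', occursInProgram P p' ∧ R.onDP p p' ≠ ⊥

/-- An atom is relevant for `𝒫` iff it is an equation, a primitive atom, or a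
defined atom whose predicate symbol is affected by `𝒫`. -/
def Relevant (R : Proximity Cd DP dpA D) (P : Set (QClause Cd DP D)) :
    Atom Cd DP → Prop
  | .defined p _ => affected R P p
  | .prim _ _ => True
  | .eq _ _ => True

end SQCLP

namespace SQCLP

variable {S : TSig} {Cd : ConstraintDomain S} {DP : Type}
variable {D : Type} [Lattice D] [BoundedOrder D]

/-- The substitution `{x ↦ t}`. -/
noncomputable def pointSubst (x : S.Var) (t : Term S) : Subst S :=
  fun y => if y = x then t else .var y

/-- The substitution `{x ↦ tx, y ↦ ty, z ↦ tz}`. -/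
noncomputable def pointSubst3 (x y z : S.Var) (tx ty tz : Term S) : Subst S :=
  fun w => if w = x then tx else if w = y then ty else if w = z then tz else .var w

/-- Existential expressibility of a qualification domain `𝒟` in a constraint
domain `𝒞`: an injective embedding `ι : D∖{⊥} → C` into the ground terms,
an existential constraint `qVal(X)` whose solutions are exactly the valuations
`η` with `η X ∈ ran(ι)`, and an existential constraint `qBound(X,Y,Z)`
encoding `x ⊑ y ∘ z` on `ι`-images. -/
structure ExpressibleIn (Q : QualDomain D) (Cd : ConstraintDomain S) where
  emb : D → Term S
  emb_ground : ∀ d : D, d ≠ ⊥ → (emb d).IsGround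
  emb_inj : ∀ d e : D, d ≠ ⊥ → e ≠ ⊥ → emb d = emb e → d = e
  qvX : S.Var
  qvE : List S.Var
  qvB : List (ACon Cd)
  qv_notE : qvX ∉ qvE
  qv_fv : ∀ c ∈ qvB, ∀ x, ACon.HasVar x c → x = qvX ∨ x ∈ qvE
  qv_spec : ∀ η : Subst S, IsValuation η →
    (ExCon.SolvedBy ⟨qvE, qvB⟩ η ↔ ∃ d : D, d ≠ ⊥ ∧ η qvX = emb d)
  qbX : S.Var
  qbY : S.Var
  qbZ : S.Var
  qb_distinct : qbX ≠ qbY ∧ qbX ≠ qbZ ∧ qbY ≠ qbZ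
  qbE : List S.Var
  qb_notE : qbX ∉ qbE ∧ qbY ∉ qbE ∧ qbZ ∉ qbE
  qbB : List (ACon Cd)
  qb_fv : ∀ c ∈ qbB, ∀ x, ACon.HasVar x c → x = qbX ∨ x = qbY ∨ x = qbZ ∨ x ∈ qbE
  qb_spec : ∀ η : Subst S, IsValuation η → ∀ x y z : D,
    x ≠ ⊥ → y ≠ ⊥ → z ≠ ⊥ → η qbX = emb x → η qbY = emb y → η qbZ = emb z →
    (ExCon.SolvedBy ⟨qbE, qbB⟩ η ↔ x ≤ Q.att y z)

variable {Q : QualDomain D}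

/-- The existential constraint `qVal(t)` (i.e. `qVal(X)` instantiated by
`{X ↦ t}`). -/
noncomputable def qvalEx (E : ExpressibleIn Q Cd) (t : Term S) : ExCon Cd :=
  ⟨E.qvE, E.qvB.map (ACon.subst (pointSubst E.qvX t))⟩

/-- The existential constraint `qBound(t₁,t₂,t₃)`. -/
noncomputable def qboundEx (E : ExpressibleIn Q Cd) (t1 t2 t3 : Term S) : ExCon Cd :=
  ⟨E.qbE, E.qbB.map (ACon.subst (pointSubst3 E.qbX E.qbY E.qbZ t1 t2 t3))⟩

/-- An existential constraint is true in `𝒞` iff it is solved by every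
valuation. -/
def ExTrue (e : ExCon Cd) : Prop := ∀ η : Subst S, IsValuation η → e.SolvedBy η

/-- The defined-predicate alphabet of `elim_𝒟` transformed programs: a copy
`p'` of each original defined predicate symbol `p` (with one extra argument)
plus the fresh predicates `qVal` and `qBound`. -/
inductive TDP (DP : Type) : Type
  | prime : DP → TDP DP
  | qval : TDP DP
  | qbound : TDP DP

/-- The program clause `qVal(X) ← B₁,…,Bₘ` of `E_𝒟`. -/
def qvalClause (E : ExpressibleIn Q Cd) (DP : Type) : Clause Cd (TDP DP) :=
  ⟨.qval, [.var E.qvX], E.qvB.map ACon.toAtom⟩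

/-- The program clause `qBound(X,Y,Z) ← C₁,…,C_q` of `E_𝒟`. -/
def qboundClause (E : ExpressibleIn Q Cd) (DP : Type) : Clause Cd (TDP DP) :=
  ⟨.qbound, [.var E.qbX, .var E.qbY, .var E.qbZ], E.qbB.map ACon.toAtom⟩

/-- The transformation of atoms `elim_𝒟(A) = (A', w)` (rules TEA, TPA, TDA):
equations and primitive atoms are unchanged and paired with `ι(⊤)`; a defined
atom `p(t₁,…,tₙ)` becomes `p'(t₁,…,tₙ,W)` paired with the fresh variable `W`. -/
inductive ElimAtom (E : ExpressibleIn Q Cd) :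
    Atom Cd DP → Atom Cd (TDP DP) → Term S → Prop
  | eq (t s : Term S) : ElimAtom E (.eq t s) (.eq t s) (E.emb ⊤)
  | prim (r : Cd.PP) (ts : List (Term S)) :
      ElimAtom E (.prim r ts) (.prim r ts) (E.emb ⊤)
  | defined (p : DP) (ts : List (Term S)) (W : S.Var) :
      (∀ t ∈ ts, ¬ t.HasVar W) →
      ElimAtom E (.defined p ts) (.defined (.prime p) (ts ++ [.var W])) (.var W)

/-- `⟦w' ⊒? ι(w)⟧`: omitted if `w = ?`, and the atom `qBound(ι(w), ι(⊤), w')`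
otherwise. -/
def threshList (E : ExpressibleIn Q Cd) (w : Option D) (w' : Term S) :
    List (Atom Cd (TDP DP)) :=
  match w with
  | none => []
  | some wj => [.defined .qbound [E.emb wj, E.emb ⊤, w']]

/-- Transformation of clause bodies (rule TPC): each annotated body atom
`Bⱼ#wⱼ` with `elim_𝒟(Bⱼ) = (Bⱼ', wⱼ')` contributes the segment
`qVal(wⱼ'), ⟦wⱼ' ⊒? ι(wⱼ)⟧, qBound(W, ι(α), wⱼ'), Bⱼ'`. -/
inductive ElimBody (E : ExpressibleIn Q Cd) (W : S.Var) (α : D) :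
    List (Atom Cd DP × Option D) → List (Term S) → List (Atom Cd (TDP DP)) → Prop
  | nil : ElimBody E W α [] [] []
  | cons (B : Atom Cd DP) (w : Option D) (B' : Atom Cd (TDP DP)) (w' : Term S)
      (rest : List (Atom Cd DP × Option D)) (ws : List (Term S))
      (rest' : List (Atom Cd (TDP DP))) :
      ElimAtom E B B' w' →
      ElimBody E W α rest ws rest' →
      ElimBody E W α ((B, w) :: rest) (w' :: ws)
        ((Atom.defined .qval [w'] :: threshList E w w' ++
          [Atom.defined .qbound [.var W, E.emb α, w'], B']) ++ rest')

/-- Transformation of program clauses (rule TPC): `cl'` is a transformed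
version of `cl`, for a choice of a fresh variable `W` and of fresh pairwise
distinct variables in the `wⱼ'`. -/
def ElimClause (E : ExpressibleIn Q Cd) (cl : QClause Cd DP D)
    (cl' : Clause Cd (TDP DP)) : Prop :=
  ∃ (W : S.Var) (ws : List (Term S)) (body' : List (Atom Cd (TDP DP))),
    ElimBody E W cl.att cl.body ws body' ∧
    ¬ cl.occursVar W ∧
    (∀ w' ∈ ws, ∀ x : S.Var, w'.HasVar x → ¬ cl.occursVar x ∧ x ≠ W) ∧
    List.Pairwise (fun a b : Term S => ∀ x : S.Var, a.HasVar x → ¬ b.HasVar x) ws ∧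
    cl' = ⟨.prime cl.head, cl.args ++ [.var W],
      Atom.defined .qval [.var W] :: body'⟩

/-- The transformed program `elim_𝒟(𝒫)`: the two clauses of `E_𝒟` together
with a transformed version of each clause of `𝒫`. -/
def elimD (E : ExpressibleIn Q Cd) (P : Set (QClause Cd DP D)) :
    Set (Clause Cd (TDP DP)) :=
  {qvalClause E DP, qboundClause E DP} ∪ {cl' | ∃ cl ∈ P, ElimClause E cl cl'}

end SQCLP

/-! Both `qVal(t)` and `qBound(t₁,t₂,t₃)` are instances `∃ Es. B σ` of an existential
constraint whose free variables `Xs` are sent by `σ` to ground terms `ts`. Such an instance is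
closed, so it is true in `𝒞` iff the body `B` has a solution `μ` with `μ Xs = ts`
(`SolvableAt B Xs ts`), and the expressibility conditions say exactly when this happens.
On the CHL side, a derivation of `p(ts)` ends with (DA) on the unique clause for `p`; evaluating
its premises at some solution of `Π` yields such a `μ`. Conversely, such a `μ` is itself an
instance for (DA): the premises `B μ` are ground and true, hence entailed by any `Π`. -/

namespace SQCLP

variable {S : TSig} {Cd : ConstraintDomain S} {DP : Type}

theorem Term.substList_eq_map (σ : Subst S) (ts : List (Term S)) :
    Term.substList σ ts = ts.map (Term.subst σ) := by
  induction ts with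
  | nil => rfl
  | cons t ts ih => rw [Term.substList, ih, List.map_cons]

@[simp]
theorem Term.subst_var (σ : Subst S) (x : S.Var) : (Term.var x).subst σ = σ x := by
  rw [Term.subst]

theorem Term.subst_of_isGround {t : Term S} (h : t.IsGround) (σ : Subst S) :
    t.subst σ = t := by
  induction h with
  | bv u => rw [Term.subst]
  | app c ts _ ih =>
    rw [Term.subst, Term.substList_eq_map]
    exact congrArg _ ((List.map_congr_left ih).trans (List.map_id ts))

mutual
theorem Term.subst_congr (σ τ : Subst S) : ∀ t : Term S,
    (∀ x, t.HasVar x → σ x = τ x) → t.subst σ = t.subst τ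
  | .var x, h => by rw [Term.subst, Term.subst, h x .var]
  | .bv _, _ => by rw [Term.subst, Term.subst]
  | .app c ts, h => by
    rw [Term.subst, Term.subst, Term.substList_congr σ τ ts fun x ⟨u, hu, hxu⟩ =>
      h x (.app c ts u hu hxu)]
theorem Term.substList_congr (σ τ : Subst S) : ∀ ts : List (Term S),
    (∀ x, (∃ u ∈ ts, u.HasVar x) → σ x = τ x) → Term.substList σ ts = Term.substList τ ts
  | [], _ => rfl
  | t :: ts, h => by
    rw [Term.substList, Term.substList,
      Term.subst_congr σ τ t fun x hx => h x ⟨t, List.mem_cons_self, hx⟩,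
      Term.substList_congr σ τ ts fun x ⟨u, hu, hxu⟩ =>
        h x ⟨u, List.mem_cons_of_mem t hu, hxu⟩]
end

mutual
theorem Term.subst_subst (θ η : Subst S) : ∀ t : Term S,
    (t.subst θ).subst η = t.subst (θ.comp η)
  | .var x => by rw [Term.subst, Term.subst]; rfl
  | .bv _ => by rw [Term.subst, Term.subst, Term.subst]
  | .app c ts => by
    rw [Term.subst, Term.subst, Term.subst, Term.substList_substList θ η ts]
theorem Term.substList_substList (θ η : Subst S) : ∀ ts : List (Term S),
    Term.substList η (Term.substList θ ts) = Term.substList (θ.comp η) ts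
  | [] => rfl
  | t :: ts => by
    rw [Term.substList, Term.substList, Term.substList, Term.subst_subst θ η t,
      Term.substList_substList θ η ts]
end

mutual
theorem Term.isGround_subst {η : Subst S} (hη : IsValuation η) : ∀ t : Term S,
    (t.subst η).IsGround
  | .var x => by rw [Term.subst]; exact hη x
  | .bv u => by rw [Term.subst]; exact .bv u
  | .app c ts => by rw [Term.subst]; exact .app c _ (Term.isGround_substList hη ts)
theorem Term.isGround_substList {η : Subst S} (hη : IsValuation η) :
    ∀ ts : List (Term S), ∀ t ∈ Term.substList η ts, t.IsGround
  | [] => by simp [Term.substList]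
  | u :: ts => by
    rw [Term.substList]
    intro t ht
    rcases List.mem_cons.mp ht with rfl | h
    exacts [Term.isGround_subst hη u, Term.isGround_substList hη ts t h]
end

theorem IsValuation.comp (θ : Subst S) {η : Subst S} (hη : IsValuation η) :
    IsValuation (θ.comp η) :=
  fun x => Term.isGround_subst hη (θ x)

theorem IsValuation.ite {μ η : Subst S} (hμ : IsValuation μ) (hη : IsValuation η)
    (p : S.Var → Prop) [DecidablePred p] :
    IsValuation fun y => if p y then μ y else η y := by
  intro y
  dsimp only
  split_ifs
  exacts [hμ y, hη y]

theorem Subst.comp_of_isValuation {μ : Subst S} (hμ : IsValuation μ) (η : Subst S) :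
    μ.comp η = μ :=
  funext fun x => Term.subst_of_isGround (hμ x) η

theorem Subst.map_comp_of_isGround {Xs : List S.Var} {σ : Subst S} {ts : List (Term S)}
    (hσ : Xs.map σ = ts) (hts : ∀ t ∈ ts, t.IsGround) (η : Subst S) :
    Xs.map (σ.comp η) = ts := by
  rw [show σ.comp η = Term.subst η ∘ σ from rfl, ← List.map_map, hσ]
  exact (List.map_congr_left fun t ht => Term.subst_of_isGround (hts t ht) η).trans
    (List.map_id ts)

theorem ACon.subst_subst (c : ACon Cd) (θ η : Subst S) :
    (c.subst θ).subst η = c.subst (θ.comp η) := by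
  cases c with
  | prim r ts =>
    simp only [ACon.subst, List.map_map]
    exact congrArg _ (List.map_congr_left fun t _ => Term.subst_subst θ η t)
  | eq t s => simp only [ACon.subst, Term.subst_subst]

theorem ACon.toAtom_subst (c : ACon Cd) (θ : Subst S) :
    (c.toAtom : Atom Cd DP).subst θ = (c.subst θ).toAtom := by
  cases c <;> rfl

theorem solves_congr {μ ν : Subst S} {c : ACon Cd} (h : ∀ x, c.HasVar x → μ x = ν x) :
    solves μ c ↔ solves ν c := by
  suffices c.subst μ = c.subst ν by rw [solves, solves, this]
  cases c with
  | prim r ts =>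
    exact congrArg _ (List.map_congr_left fun t ht =>
      Term.subst_congr μ ν t fun x hx => h x (.prim r ts t ht hx))
  | eq t s =>
    simp only [ACon.subst]
    rw [Term.subst_congr μ ν t fun x hx => h x (.eqL t s hx),
      Term.subst_congr μ ν s fun x hx => h x (.eqR t s hx)]

theorem solves_subst {η θ : Subst S} {c : ACon Cd} :
    solves η (c.subst θ) ↔ solves (θ.comp η) c := by
  rw [solves, solves, ACon.subst_subst]

theorem entails_eq_self (Pi : Set (ACon Cd)) (t : Term S) : entails Pi (.eq t t) :=
  fun _ _ => rfl

theorem entails_subst_of_solves {Pi : Set (ACon Cd)} {μ : Subst S} {c : ACon Cd}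
    (hμ : IsValuation μ) (h : solves μ c) : entails Pi (c.subst μ) := by
  intro η _
  rwa [solves_subst, Subst.comp_of_isValuation hμ]

section CHL

variable {P : Set (Clause Cd DP)} {Pi : Set (ACon Cd)}

theorem CHL.of_entails {c : ACon Cd} (h : entails Pi c) : CHL P Pi c.toAtom := by
  cases c with
  | prim r ts => exact .PA r ts h
  | eq t s => exact .EA t s h

theorem CHL.entails {c : ACon Cd} (h : CHL P Pi c.toAtom) : entails Pi c := by
  cases c with
  | prim r ts => cases h with | PA _ _ h => exact h
  | eq t s => cases h with | EA _ _ h => exact h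

theorem CHL.exists_clause_of_defined {p : DP} {ts : List (Term S)}
    (h : CHL P Pi (.defined p ts)) :
    ∃ cl ∈ P, ∃ θ : Subst S, cl.head = p ∧ ts.length = cl.args.length ∧
      (∀ (i : ℕ) (h1 : i < ts.length) (h2 : i < cl.args.length),
        CHL P Pi (.eq (ts.get ⟨i, h1⟩) ((cl.args.get ⟨i, h2⟩).subst θ))) ∧
      ∀ B ∈ cl.body, CHL P Pi (B.subst θ) := by
  cases h with
  | DA cl θ _ hmem hlen hargs hbody => exact ⟨cl, hmem, θ, rfl, hlen, hargs, hbody⟩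

end CHL

def SolvableAt (B : List (ACon Cd)) (Xs : List S.Var) (ts : List (Term S)) : Prop :=
  ∃ μ : Subst S, IsValuation μ ∧ Xs.map μ = ts ∧ ∀ c ∈ B, solves μ c

section Instance

variable {Es Xs : List S.Var} {B : List (ACon Cd)} {ts : List (Term S)}

theorem solvedBy_subst_iff {σ : Subst S} (hfv : ∀ c ∈ B, ∀ x, c.HasVar x → x ∈ Xs ∨ x ∈ Es)
    (hfix : ∀ x ∈ Es, σ x = .var x) (hσ : Xs.map σ = ts) (hts : ∀ t ∈ ts, t.IsGround)
    {η : Subst S} (hη : IsValuation η) :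
    (⟨Es, B.map (ACon.subst σ)⟩ : ExCon Cd).SolvedBy η ↔ SolvableAt B Xs ts := by
  constructor
  · rintro ⟨η', hη', -, hsol⟩
    exact ⟨σ.comp η', hη'.comp σ, Subst.map_comp_of_isGround hσ hts η', fun c hc =>
      solves_subst.mp (hsol _ (List.mem_map_of_mem hc))⟩
  · rintro ⟨μ, hμ, hμσ, hsol⟩
    refine ⟨fun y => if y ∈ Es then μ y else η y, hμ.ite hη _, fun y hy => if_neg hy, ?_⟩
    simp only [List.forall_mem_map]
    intro c hc
    refine solves_subst.mpr ((solves_congr fun x hx => ?_).mpr (hsol c hc))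
    rcases hfv c hc x hx with hxX | hxE
    · have hσx : σ x ∈ ts := hσ ▸ List.mem_map_of_mem hxX
      rw [Subst.comp, Term.subst_of_isGround (hts _ hσx),
        List.map_inj_left.mp (hμσ.trans hσ.symm) x hxX]
    · rw [Subst.comp, hfix x hxE, Term.subst_var, if_pos hxE]

theorem exTrue_subst_iff {σ : Subst S} (hfv : ∀ c ∈ B, ∀ x, c.HasVar x → x ∈ Xs ∨ x ∈ Es)
    (hfix : ∀ x ∈ Es, σ x = .var x) (hσ : Xs.map σ = ts) (hts : ∀ t ∈ ts, t.IsGround)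
    {η₀ : Subst S} (hη₀ : IsValuation η₀) :
    ExTrue (⟨Es, B.map (ACon.subst σ)⟩ : ExCon Cd) ↔ SolvableAt B Xs ts :=
  ⟨fun h => (solvedBy_subst_iff hfv hfix hσ hts hη₀).mp (h η₀ hη₀),
    fun h _ hη => (solvedBy_subst_iff hfv hfix hσ hts hη).mpr h⟩

theorem solvableAt_iff_solvedBy (hfv : ∀ c ∈ B, ∀ x, c.HasVar x → x ∈ Xs ∨ x ∈ Es)
    (hXs : ∀ x ∈ Xs, x ∉ Es) {η : Subst S} (hη : IsValuation η) (hηXs : Xs.map η = ts) :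
    SolvableAt B Xs ts ↔ (⟨Es, B⟩ : ExCon Cd).SolvedBy η := by
  constructor
  · rintro ⟨μ, hμ, hμXs, hsol⟩
    refine ⟨fun y => if y ∈ Es then μ y else η y, hμ.ite hη _, fun y hy => if_neg hy,
      fun c hc => (solves_congr fun x hx => ?_).mpr (hsol c hc)⟩
    rcases hfv c hc x hx with hxX | hxE
    · rw [if_neg (hXs x hxX), List.map_inj_left.mp (hηXs.trans hμXs.symm) x hxX]
    · rw [if_pos hxE]
  · rintro ⟨η', hη', hagree, hsol⟩
    exact ⟨η', hη', (List.map_inj_left.mpr fun x hx => hagree x (hXs x hx)).trans hηXs, hsol⟩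

variable {P : Set (Clause Cd DP)} {Pi : Set (ACon Cd)} {p : DP}

theorem chl_of_solvableAt (hcl : ⟨p, Xs.map Term.var, B.map ACon.toAtom⟩ ∈ P)
    (h : SolvableAt B Xs ts) : CHL P Pi (.defined p ts) := by
  obtain ⟨μ, hμ, rfl, hsol⟩ := h
  refine CHL.DA _ μ _ hcl (by simp) (fun i _ _ => ?_) ?_
  · simpa using CHL.EA _ _ (entails_eq_self Pi _)
  · simp only [List.forall_mem_map]
    intro c hc
    rw [ACon.toAtom_subst]
    exact CHL.of_entails (entails_subst_of_solves hμ (hsol c hc))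

theorem solvableAt_of_chl
    (huniq : ∀ cl ∈ P, cl.head = p → cl = ⟨p, Xs.map Term.var, B.map ACon.toAtom⟩)
    (hsat : Satisfiable Pi) (hts : ∀ t ∈ ts, t.IsGround) (h : CHL P Pi (.defined p ts)) :
    SolvableAt B Xs ts := by
  obtain ⟨η₀, hη₀⟩ := hsat
  obtain ⟨cl, hmem, θ, hhead, hlen, hargs, hbody⟩ := h.exists_clause_of_defined
  obtain rfl := huniq cl hmem hhead
  refine ⟨θ.comp η₀, hη₀.1.comp θ, List.ext_getElem (by simpa using hlen.symm) ?_, ?_⟩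
  · intro i hXs hts'
    have hent := CHL.entails (c := .eq _ _) (hargs i hts' (by simpa using hXs)) η₀ hη₀
    simp only [solves, ACon.subst, ACon.holds, List.get_eq_getElem, List.getElem_map,
      Term.subst_var, Term.subst_of_isGround (hts _ (List.getElem_mem hts'))] at hent
    simp [Subst.comp, hent]
  · simp only [List.forall_mem_map] at hbody
    exact fun c hc => solves_subst.mp (CHL.entails (ACon.toAtom_subst c θ ▸ hbody c hc) η₀ hη₀)

end Instance

section Expressibility

variable {D : Type} [Lattice D] [BoundedOrder D] {Q : QualDomain D} (E : ExpressibleIn Q Cd)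

theorem ExpressibleIn.qvB_vars :
    ∀ c ∈ E.qvB, ∀ x, c.HasVar x → x ∈ [E.qvX] ∨ x ∈ E.qvE := by
  simpa only [List.mem_singleton] using E.qv_fv

theorem ExpressibleIn.qbB_vars :
    ∀ c ∈ E.qbB, ∀ x, c.HasVar x → x ∈ [E.qbX, E.qbY, E.qbZ] ∨ x ∈ E.qbE := by
  simpa only [List.mem_cons, List.not_mem_nil, or_false, or_assoc] using E.qb_fv

theorem ExpressibleIn.pointSubst_of_mem_qvE (t : Term S) :
    ∀ x ∈ E.qvE, pointSubst E.qvX t x = .var x :=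
  fun _ hx => if_neg (ne_of_mem_of_not_mem hx E.qv_notE)

theorem ExpressibleIn.pointSubst3_of_mem_qbE (t1 t2 t3 : Term S) :
    ∀ x ∈ E.qbE, pointSubst3 E.qbX E.qbY E.qbZ t1 t2 t3 x = .var x := by
  intro x hx
  obtain ⟨hX, hY, hZ⟩ := E.qb_notE
  rw [pointSubst3, if_neg (ne_of_mem_of_not_mem hx hX), if_neg (ne_of_mem_of_not_mem hx hY),
    if_neg (ne_of_mem_of_not_mem hx hZ)]

theorem ExpressibleIn.map_pointSubst3 (t1 t2 t3 : Term S) :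
    [E.qbX, E.qbY, E.qbZ].map (pointSubst3 E.qbX E.qbY E.qbZ t1 t2 t3) = [t1, t2, t3] := by
  obtain ⟨hXY, hXZ, hYZ⟩ := E.qb_distinct
  simp [pointSubst3, hXY.symm, hXZ.symm, hYZ.symm]

theorem exTrue_qvalEx_iff {t : Term S} (ht : t.IsGround) :
    ExTrue (qvalEx E t) ↔ SolvableAt E.qvB [E.qvX] [t] :=
  exTrue_subst_iff E.qvB_vars (E.pointSubst_of_mem_qvE t) (by simp [pointSubst])
    (by simpa using ht) (η₀ := fun _ => t) fun _ => ht

theorem exTrue_qboundEx_iff {t1 t2 t3 : Term S} (hts : ∀ t ∈ [t1, t2, t3], t.IsGround) :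
    ExTrue (qboundEx E t1 t2 t3) ↔ SolvableAt E.qbB [E.qbX, E.qbY, E.qbZ] [t1, t2, t3] :=
  exTrue_subst_iff E.qbB_vars (E.pointSubst3_of_mem_qbE t1 t2 t3) (E.map_pointSubst3 t1 t2 t3)
    hts (η₀ := fun _ => t1) fun _ => hts t1 List.mem_cons_self

theorem solvableAt_qval_iff {t : Term S} (ht : t.IsGround) :
    SolvableAt E.qvB [E.qvX] [t] ↔ ∃ d : D, d ≠ ⊥ ∧ E.emb d = t := by
  rw [solvableAt_iff_solvedBy E.qvB_vars (by simpa using E.qv_notE) (η := fun _ => t)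
    (ts := [t]) (fun _ => ht) rfl, E.qv_spec _ fun _ => ht]
  simp only [eq_comm]

theorem solvableAt_qbound_iff {x y z : D} (hx : x ≠ ⊥) (hy : y ≠ ⊥) (hz : z ≠ ⊥) :
    SolvableAt E.qbB [E.qbX, E.qbY, E.qbZ] [E.emb x, E.emb y, E.emb z] ↔ x ≤ Q.att y z := by
  set η := (pointSubst3 E.qbX E.qbY E.qbZ (E.emb x) (E.emb y) (E.emb z)).comp fun _ => E.emb x
  have hη : IsValuation η := IsValuation.comp _ fun _ => E.emb_ground x hx
  have hηXs : [E.qbX, E.qbY, E.qbZ].map η = [E.emb x, E.emb y, E.emb z] :=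
    Subst.map_comp_of_isGround (E.map_pointSubst3 _ _ _) (by simp [E.emb_ground, hx, hy, hz]) _
  obtain ⟨hηX, hηY, hηZ⟩ : η E.qbX = E.emb x ∧ η E.qbY = E.emb y ∧ η E.qbZ = E.emb z := by
    simpa using hηXs
  rw [solvableAt_iff_solvedBy E.qbB_vars (by simpa using E.qb_notE) hη hηXs]
  exact E.qb_spec η hη x y z hx hy hz hηX hηY hηZ

end Expressibility

/-- Lemma expr: let `𝒟` be existentially expressible in `𝒞` via
`ι`, `qVal`, `qBound`, and let `𝒫` be any CLP(𝒞)-program including the two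
clauses of `E_𝒟` and having no additional occurrences of `qVal` and `qBound`
at the head of clauses (in particular `𝒫 = E_𝒟`).  Then, for any finite
satisfiable constraint set `Π`:
(1) for ground `t`: `t ∈ ran(ι)` iff `qVal(t)` is true in `𝒞` iff
`𝒫 ⊢_CHL (qVal(t) ⇐ Π)`;
(2) for `x,y,z ∈ D∖{⊥}`: `x ⊑ y ∘ z` iff `qBound(ι x, ι y, ι z)` is true in
`𝒞` iff `𝒫 ⊢_CHL (qBound(ι x, ι y, ι z) ⇐ Π)`. -/
theorem stmt10 {S : TSig} {Cd : ConstraintDomain S} {DP : Type}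
    {D : Type} [Lattice D] [BoundedOrder D]
    (Q : QualDomain D) (E : ExpressibleIn Q Cd)
    (Pi : Set (ACon Cd)) (hfin : Pi.Finite) (hsat : Satisfiable Pi)
    (P : Set (Clause Cd (TDP DP)))
    (h1 : qvalClause E DP ∈ P) (h2 : qboundClause E DP ∈ P)
    (h3 : ∀ cl ∈ P, cl.head = TDP.qval → cl = qvalClause E DP)
    (h4 : ∀ cl ∈ P, cl.head = TDP.qbound → cl = qboundClause E DP) :
    (∀ t : Term S, t.IsGround →
      ((∃ d : D, d ≠ ⊥ ∧ E.emb d = t) ↔ ExTrue (qvalEx E t)) ∧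
      (ExTrue (qvalEx E t) ↔ CHL P Pi (.defined TDP.qval [t]))) ∧
    (∀ x y z : D, x ≠ ⊥ → y ≠ ⊥ → z ≠ ⊥ →
      ((x ≤ Q.att y z) ↔ ExTrue (qboundEx E (E.emb x) (E.emb y) (E.emb z))) ∧
      (ExTrue (qboundEx E (E.emb x) (E.emb y) (E.emb z)) ↔
        CHL P Pi (.defined TDP.qbound [E.emb x, E.emb y, E.emb z]))) := by
  refine ⟨fun t ht => ?_, fun x y z hx hy hz => ?_⟩
  · have hsolv := exTrue_qvalEx_iff E ht
    exact ⟨(solvableAt_qval_iff E ht).symm.trans hsolv.symm,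
      hsolv.trans ⟨chl_of_solvableAt h1, solvableAt_of_chl h3 hsat (by simpa using ht)⟩⟩
  · have hground : ∀ t ∈ [E.emb x, E.emb y, E.emb z], t.IsGround := by
      simp [E.emb_ground, hx, hy, hz]
    have hsolv := exTrue_qboundEx_iff E hground
    exact ⟨(solvableAt_qbound_iff E hx hy hz).symm.trans hsolv.symm,
      hsolv.trans ⟨chl_of_solvableAt h2, solvableAt_of_chl h4 hsat hground⟩⟩

end SQCLP
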